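/- Let a_i, a_j, a_k > 0, set s_r = cosh(a_r/2) for r ∈ {i,j,k}, and let w be a real number satisfying cosh(a_j/2)·cosh(a_k/2) - sinh(a_i/2)·sinh(w) = (cosh(a_j)·cosh(a_k) + cosh(a_i))/(4·cosh(a_j/2)·cosh(a_k/2)). Then sinh(w) = (s_j² + s_k² - s_i²)/(2·s_j·s_k·√(s_i² - 1)), provided a_i > 0 so that s_i > 1. -/
import Mathlib


theorem stmt_8 (ai aj ak w : ℝ) (hi : 0 < ai) (hj : 0 < aj) (hk : 0 < ak)
    (si sj sk : ℝ) (hsi : si = Real.cosh (ai / 2)) (hsj : sj = Real.cosh (aj / 2))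
    (hsk : sk = Real.cosh (ak / 2))
    (hw : Real.cosh (aj / 2) * Real.cosh (ak / 2) - Real.sinh (ai / 2) * Real.sinh w
      = (Real.cosh aj * Real.cosh ak + Real.cosh ai)
          / (4 * Real.cosh (aj / 2) * Real.cosh (ak / 2))) :
    Real.sinh w = (sj ^ 2 + sk ^ 2 - si ^ 2)
      / (2 * sj * sk * Real.sqrt (si ^ 2 - 1)) := by
  set S := Real.sinh (ai / 2) with hS
  have hSpos : 0 < S := by have := Real.cosh_sq_sub_sinh_sq (0:ℝ); nlinarith [Real.sinh_lt_sinh.mpr (show (0:ℝ) < ai/2 by linarith), Real.sinh_zero]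
  have hsqrt : Real.sqrt (si ^ 2 - 1) = S := by
    have : si ^ 2 - 1 = S ^ 2 := by
      rw [hsi, hS]
      have := Real.cosh_sq_sub_sinh_sq (ai / 2)
      nlinarith [this]
    rw [this, Real.sqrt_sq hSpos.le]
  have hsjpos : 0 < sj := by rw [hsj]; exact Real.cosh_pos _
  have hskpos : 0 < sk := by rw [hsk]; exact Real.cosh_pos _
  have hcj : Real.cosh aj = 2 * sj ^ 2 - 1 := by
    rw [hsj]; have h := Real.cosh_two_mul (aj/2); rw [show 2*(aj/2)=aj by ring] at h; nlinarith [Real.cosh_sq_sub_sinh_sq (aj/2)]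
  have hck : Real.cosh ak = 2 * sk ^ 2 - 1 := by
    rw [hsk]; have h := Real.cosh_two_mul (ak/2); rw [show 2*(ak/2)=ak by ring] at h; nlinarith [Real.cosh_sq_sub_sinh_sq (ak/2)]
  have hci : Real.cosh ai = 2 * si ^ 2 - 1 := by
    rw [hsi]; have h := Real.cosh_two_mul (ai/2); rw [show 2*(ai/2)=ai by ring] at h; nlinarith [Real.cosh_sq_sub_sinh_sq (ai/2)]
  rw [hsqrt]
  rw [hcj, hck, hci, ← hsj, ← hsk] at hw
  have hkey : S * Real.sinh w = (sj ^ 2 + sk ^ 2 - si ^ 2) / (2 * sj * sk) := by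
    field_simp at hw ⊢
    nlinarith [hw]
  rw [eq_div_iff (by positivity)] at hkey ⊢
  nlinarith [hkey]
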